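/- arXiv:2509.06752 — 6 statements merged into one kernel-verified Lean document; each statement's English description precedes it below -/
import Mathlib

section
/- (Ramsey-based disjunctive well-foundedness) Let T ⊆ S × S be a transition relation and suppose T⁺ (the transitive closure of T) is contained in T₁ ∪ ⋯ ∪ T_d where each Tᵢ ⊆ S × S is well-founded (admits no infinite descending chain). Then T itself is well-founded, i.e., there is no infinite sequence s₀, s₁, … with (sᵢ, sᵢ₊₁) ∈ T for all i. -/
lemma pigeon_aux {d : ℕ} (h : ℕ → Fin d) {A : Set ℕ} (hA : A.Infinite) :
    ∃ i, {n | n ∈ A ∧ h n = i}.Infinite := by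
  by_contra hc
  push_neg at hc
  have hsub : A ⊆ ⋃ i, {n | n ∈ A ∧ h n = i} := fun n hn => Set.mem_iUnion.2 ⟨h n, hn, rfl⟩
  exact hA ((Set.finite_iUnion hc).subset hsub)

lemma step_ex {d : ℕ} (c : ℕ → ℕ → Fin d) {A : Set ℕ} (hA : A.Infinite) :
    ∃ i, {x | x ∈ A ∧ sInf A < x ∧ c (sInf A) x = i}.Infinite := by
  have h1 : {x | x ∈ A ∧ sInf A < x}.Infinite := by
    refine (hA.diff (Set.finite_Iic (sInf A))).mono ?_
    intro x hx
    exact ⟨hx.1, lt_of_not_ge fun hle => hx.2 hle⟩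
  obtain ⟨i, hi⟩ := pigeon_aux (c (sInf A)) h1
  refine ⟨i, hi.mono ?_⟩
  rintro x ⟨⟨hx1, hx2⟩, hx3⟩
  exact ⟨hx1, hx2, hx3⟩

noncomputable def rchain {d : ℕ} (c : ℕ → ℕ → Fin d) : ℕ → {A : Set ℕ // A.Infinite}
  | 0 => ⟨Set.univ, Set.infinite_univ⟩
  | n + 1 => ⟨_, (step_ex c (rchain c n).2).choose_spec⟩

noncomputable def rcol {d : ℕ} (c : ℕ → ℕ → Fin d) (n : ℕ) : Fin d :=
  (step_ex c (rchain c n).2).choose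

noncomputable def rpiv {d : ℕ} (c : ℕ → ℕ → Fin d) (n : ℕ) : ℕ :=
  sInf (rchain c n).1

lemma rchain_succ {d : ℕ} (c : ℕ → ℕ → Fin d) (n : ℕ) :
    (rchain c (n + 1)).1 =
      {x | x ∈ (rchain c n).1 ∧ rpiv c n < x ∧ c (rpiv c n) x = rcol c n} := rfl

lemma rpiv_mem {d : ℕ} (c : ℕ → ℕ → Fin d) (n : ℕ) : rpiv c n ∈ (rchain c n).1 :=
  Nat.sInf_mem (rchain c n).2.nonempty

lemma rchain_mono {d : ℕ} (c : ℕ → ℕ → Fin d) {n m : ℕ} (h : n ≤ m) :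
    (rchain c m).1 ⊆ (rchain c n).1 := by
  induction m with
  | zero => simp_all
  | succ m ih =>
    rcases Nat.lt_or_ge n (m + 1) with h' | h'
    · intro x hx
      rw [rchain_succ] at hx
      exact ih (Nat.lt_succ_iff.mp h') hx.1
    · have : n = m + 1 := le_antisymm h h'
      subst this; exact fun x hx => hx

lemma rpiv_key {d : ℕ} (c : ℕ → ℕ → Fin d) {k l : ℕ} (h : k < l) :
    rpiv c k < rpiv c l ∧ c (rpiv c k) (rpiv c l) = rcol c k := by
  have hmem : rpiv c l ∈ (rchain c (k + 1)).1 :=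
    rchain_mono c h (rpiv_mem c l)
  rw [rchain_succ] at hmem
  exact ⟨hmem.2.1, hmem.2.2⟩

lemma ramsey_pairs {d : ℕ} (c : ℕ → ℕ → Fin d) (hd : 0 < d) :
    ∃ (g : ℕ → ℕ) (i : Fin d), StrictMono g ∧ ∀ k l, k < l → c (g k) (g l) = i := by
  obtain ⟨i, hi⟩ := pigeon_aux (rcol c) (Set.infinite_univ (α := ℕ))
  have hi' : {n | rcol c n = i}.Infinite := hi.mono (by intro x hx; exact hx.2)
  refine ⟨fun k => rpiv c (Nat.nth (fun n => rcol c n = i) k), i, ?_, ?_⟩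
  · intro a b hab
    exact (rpiv_key c ((Nat.nth_strictMono hi') hab)).1
  · intro k l hkl
    have h1 := (rpiv_key c ((Nat.nth_strictMono hi') hkl)).2
    rw [h1]
    exact Nat.nth_mem_of_infinite hi' k

theorem stmt_2 {S : Type*} (T : Set (S × S)) (d : ℕ) (Ti : Fin d → Set (S × S))
    (hcover : ∀ a b : S, Relation.TransGen (fun x y => (x, y) ∈ T) a b →
      ∃ i, (a, b) ∈ Ti i)
    (hwf : ∀ i, ¬ ∃ f : ℕ → S, ∀ k, (f k, f (k + 1)) ∈ Ti i) :
    ¬ ∃ f : ℕ → S, ∀ k, (f k, f (k + 1)) ∈ T := by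
  rintro ⟨f, hf⟩
  have htg : ∀ k l : ℕ, k < l → Relation.TransGen (fun x y => (x, y) ∈ T) (f k) (f l) := by
    intro k l hkl
    induction l with
    | zero => omega
    | succ l ih =>
      rcases Nat.lt_or_ge k l with h' | h'
      · exact Relation.TransGen.tail (ih h') (hf l)
      · have : k = l := by omega
        subst this
        exact Relation.TransGen.single (hf k)
  have hd : 0 < d := by
    obtain ⟨i, _⟩ := hcover (f 0) (f 1) (htg 0 1 one_pos)
    exact i.pos
  classical
  let c : ℕ → ℕ → Fin d := fun k l =>
    if h : k < l then (hcover (f k) (f l) (htg k l h)).choose else ⟨0, hd⟩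
  have hc : ∀ k l (h : k < l), (f k, f l) ∈ Ti (c k l) := by
    intro k l h
    simp only [c, dif_pos h]
    exact (hcover (f k) (f l) (htg k l h)).choose_spec
  obtain ⟨g, i, hg, hmono⟩ := ramsey_pairs c hd
  refine hwf i ⟨fun k => f (g k), fun k => ?_⟩
  have hlt : g k < g (k + 1) := hg (Nat.lt_succ_self k)
  have := hc (g k) (g (k + 1)) hlt
  simp only
  rw [← hmono k (k + 1) (Nat.lt_succ_self k)]
  exact this
end

section
/- (Nested ranking functions prove termination) Let Q ⊆ ℚⁿ × ℚⁿ be a transition relation and ρ₁, …, ρ_d : ℚⁿ → ℚ affine functions, with ρ₀ defined as the constant zero function. Suppose that for all (x, x') ∈ Q: ρ_d(x) ≥ 0, and for every i = 1, …, d, ρᵢ(x) − ρᵢ(x') + ρ_{i−1}(x) ≥ 1. Then Q is well-founded. -/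
lemma nlrf_decrease (g : ℕ → ℚ) (K0 : ℕ)
    (hstep : ∀ k, K0 ≤ k → g (k + 1) ≤ g k - 1) :
    ∀ B : ℚ, ∃ K : ℕ, ∀ k, K ≤ k → g k < B := by
  have hbound : ∀ k, K0 ≤ k → g k ≤ g K0 - ((k - K0 : ℕ) : ℚ) := by
    intro k hk
    induction k with
    | zero => simp_all
    | succ m ih =>
      rcases Nat.lt_or_ge K0 (m + 1) with hlt | hge
      · have hm : K0 ≤ m := Nat.lt_succ_iff.mp hlt
        have := hstep m hm
        have hih := ih hm
        have : g (m + 1) ≤ g K0 - ((m - K0 : ℕ) : ℚ) - 1 := by linarith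
        have hcast : ((m + 1 - K0 : ℕ) : ℚ) = ((m - K0 : ℕ) : ℚ) + 1 := by
          rw [Nat.sub_add_comm hm]; push_cast; ring
        rw [hcast]; linarith
      · have : K0 = m + 1 := le_antisymm hk hge
        subst this; simp
  intro B
  obtain ⟨N, hN⟩ := exists_nat_gt (g K0 - B)
  refine ⟨K0 + N, fun k hk => ?_⟩
  have hk0 : K0 ≤ k := le_trans (Nat.le_add_right _ _) hk
  have h1 := hbound k hk0
  have h2 : (N : ℚ) ≤ ((k - K0 : ℕ) : ℚ) := by
    have : N ≤ k - K0 := Nat.le_sub_of_add_le (by omega)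
    exact_mod_cast this
  linarith

theorem stmt_7 (n d : ℕ) (hd : 1 ≤ d)
    (Q : Set ((Fin n → ℚ) × (Fin n → ℚ)))
    (ρ : ℕ → (Fin n → ℚ) → ℚ)
    (L : ℕ → Fin n → ℚ) (c : ℕ → ℚ)
    (hρ0 : ∀ x, ρ 0 x = 0)
    (haff : ∀ i, 1 ≤ i → i ≤ d → ∀ x, ρ i x = (∑ j, L i j * x j) + c i)
    (h : ∀ p ∈ Q, 0 ≤ ρ d p.1 ∧
      ∀ i, 1 ≤ i → i ≤ d → 1 ≤ ρ i p.1 - ρ i p.2 + ρ (i - 1) p.1) :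
    ¬ ∃ f : ℕ → (Fin n → ℚ), ∀ k, (f k, f (k + 1)) ∈ Q := by
  rintro ⟨f, hf⟩
  have key : ∀ i, 1 ≤ i → i ≤ d → ∀ B : ℚ, ∃ K : ℕ, ∀ k, K ≤ k → ρ i (f k) < B := by
    intro i
    induction i with
    | zero => intro h1; omega
    | succ m ih =>
      intro _ hmd
      have hneg : ∃ K0 : ℕ, ∀ k, K0 ≤ k → ρ m (f k) ≤ 0 := by
        rcases Nat.eq_zero_or_pos m with hm0 | hm1
        · subst hm0; exact ⟨0, fun k _ => le_of_eq (hρ0 _)⟩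
        · obtain ⟨K0, hK0⟩ := ih hm1 (le_trans (Nat.le_succ m) hmd) 0
          exact ⟨K0, fun k hk => le_of_lt (hK0 k hk)⟩
      obtain ⟨K0, hK0⟩ := hneg
      apply nlrf_decrease (fun k => ρ (m + 1) (f k)) K0
      intro k hk
      have hQ := (h (f k, f (k + 1)) (hf k)).2 (m + 1) (Nat.le_add_left 1 m) hmd
      simp only [Nat.add_sub_cancel] at hQ
      have := hK0 k hk
      linarith
  obtain ⟨K, hK⟩ := key d hd le_rfl 0
  have h1 := hK K le_rfl
  have h2 := (h (f K, f (K + 1)) (hf K)).1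
  linarith
end

section
/- (Multiphase ranking functions prove termination) Let T ⊆ ℚⁿ × ℚⁿ and ρ₁, …, ρ_d : ℚⁿ → ℚ be affine functions such that for every (x, x') ∈ T there exists an index i with: ρⱼ(x) − ρⱼ(x') ≥ 1 for all j ≤ i, and ρᵢ(x) ≥ 0. Then T is well-founded. -/
theorem mphi_aux : ∀ (d : ℕ) {X : Type} (ρ : Fin d → X → ℚ) (f : ℕ → X),
    (∀ k, ∃ i : Fin d, (∀ j ≤ i, 1 ≤ ρ j (f k) - ρ j (f (k+1))) ∧ 0 ≤ ρ i (f k)) → False := by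
  intro d
  induction d with
  | zero => intro X ρ f h; exact (h 0).choose.elim0
  | succ d ih =>
    intro X ρ f h
    have hdec : ∀ k, ρ 0 (f (k+1)) ≤ ρ 0 (f k) - 1 := by
      intro k
      obtain ⟨i, hi, _⟩ := h k
      have := hi 0 (Fin.zero_le i)
      linarith
    have hbound : ∀ k, ρ 0 (f k) ≤ ρ 0 (f 0) - k := by
      intro k
      induction k with
      | zero => simp
      | succ k ihk =>
        have := hdec k
        push_cast
        linarith
    obtain ⟨K, hK⟩ := exists_nat_gt (ρ 0 (f 0))
    have hneg : ∀ k, ρ 0 (f (K + k)) < 0 := by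
      intro k
      have h1 := hbound (K + k)
      have h2 : (0:ℚ) ≤ k := Nat.cast_nonneg k
      push_cast at h1
      linarith
    apply ih (fun j => ρ j.succ) (fun k => f (K + k))
    intro k
    obtain ⟨i, hi, hpos⟩ := h (K + k)
    have hne : i ≠ 0 := by
      intro h0
      rw [h0] at hpos
      exact absurd hpos (not_le.mpr (hneg k))
    obtain ⟨i', rfl⟩ := Fin.eq_succ_of_ne_zero hne
    refine ⟨i', fun j hj => ?_, hpos⟩
    have := hi j.succ (Fin.succ_le_succ_iff.mpr hj)
    have heq : K + (k + 1) = K + k + 1 := by omega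
    rw [heq]
    exact this

theorem stmt_8 (n d : ℕ)
    (T : Set ((Fin n → ℚ) × (Fin n → ℚ)))
    (L : Fin d → Fin n → ℚ) (c : Fin d → ℚ)
    (ρ : Fin d → (Fin n → ℚ) → ℚ)
    (hρ : ∀ i x, ρ i x = (∑ j, L i j * x j) + c i)
    (h : ∀ p ∈ T, ∃ i : Fin d,
      (∀ j ≤ i, 1 ≤ ρ j p.1 - ρ j p.2) ∧ 0 ≤ ρ i p.1) :
    ¬ ∃ f : ℕ → (Fin n → ℚ), ∀ k, (f k, f (k + 1)) ∈ T := by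
  rintro ⟨f, hf⟩
  exact mphi_aux d ρ f (fun k => h (f k, f (k+1)) (hf k))
end

section
/- (Geometric non-termination argument, rank-one case) Let Q ⊆ ℝⁿ × ℝⁿ be defined by a matrix inequality A''(x, x') ≤ c (so Q is a convex polyhedral relation). Suppose there exist x₀, y ∈ ℝⁿ and λ ≥ 0 such that A''(x₀, x₀ + y) ≤ c and A''(y, λ·y) ≤ 0. Then the sequence defined by z₀ = x₀ and z_{m+1} = z_m + λᵐ·y satisfies (z_m, z_{m+1}) ∈ Q for all m ≥ 0; hence Q is non-terminating. -/
theorem stmt_14 (n m : ℕ) (A B : Matrix (Fin m) (Fin n) ℝ) (c : Fin m → ℝ)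
    (Q : Set ((Fin n → ℝ) × (Fin n → ℝ)))
    (hQ : ∀ x x', (x, x') ∈ Q ↔ A.mulVec x + B.mulVec x' ≤ c)
    (x₀ y : Fin n → ℝ) (lam : ℝ) (hlam : 0 ≤ lam)
    (h1 : A.mulVec x₀ + B.mulVec (x₀ + y) ≤ c)
    (h2 : A.mulVec y + B.mulVec (lam • y) ≤ 0)
    (z : ℕ → (Fin n → ℝ)) (hz0 : z 0 = x₀)
    (hzs : ∀ k, z (k + 1) = z k + lam ^ k • y) :
    (∀ k, (z k, z (k + 1)) ∈ Q) ∧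
    ∃ f : ℕ → (Fin n → ℝ), ∀ i, (f i, f (i + 1)) ∈ Q := by
  have key : ∀ k, A.mulVec (z k) + B.mulVec (z (k + 1)) ≤ c := by
    intro k
    induction k with
    | zero =>
      rw [hzs 0, hz0]
      simpa using h1
    | succ k ih =>
      rw [hzs (k + 1)]
      rw [hzs k] at *
      intro i
      have h2i := h2 i
      have ihi := ih i
      have hpow : (0 : ℝ) ≤ lam ^ k := pow_nonneg hlam k
      simp only [Matrix.mulVec_add, Matrix.mulVec_smul, Pi.add_apply, Pi.smul_apply,
        smul_eq_mul, Pi.le_def, Pi.zero_apply, pow_succ] at *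
      nlinarith [h2i, ihi, hpow]
  have hk : ∀ k, (z k, z (k + 1)) ∈ Q := fun k => (hQ _ _).2 (key k)
  exact ⟨hk, z, hk⟩
end

section
/- (δSCT well-foundedness from a negative cycle, algebraic core) Let Q ⊆ ℕⁿ × ℕⁿ be a transition relation such that there is a non-empty set S ⊆ {1, …, n}, a bijection σ : S → S, and integers δᵢ for i ∈ S with Σ_{i∈S} δᵢ < 0, where every (x, x') ∈ Q satisfies x'_{σ(i)} ≤ xᵢ + δᵢ for all i ∈ S. Then ρ(x) = Σ_{i∈S} xᵢ satisfies ρ(x') < ρ(x) for all (x, x') ∈ Q, and since ρ takes values in ℕ, Q is well-founded. -/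
theorem stmt_17 (n : ℕ) (Q : Set ((Fin n → ℕ) × (Fin n → ℕ)))
    (S : Finset (Fin n)) (hS : S.Nonempty)
    (σ : Fin n → Fin n) (hσ : Set.BijOn σ ↑S ↑S)
    (δ : Fin n → ℤ) (hδ : (∑ i ∈ S, δ i) < 0)
    (hQ : ∀ p ∈ Q, ∀ i ∈ S, (p.2 (σ i) : ℤ) ≤ (p.1 i : ℤ) + δ i) :
    (∀ p ∈ Q, (∑ i ∈ S, p.2 i) < ∑ i ∈ S, p.1 i) ∧
    ¬ ∃ f : ℕ → (Fin n → ℕ), ∀ k, (f k, f (k + 1)) ∈ Q := by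
  have key : ∀ p ∈ Q, (∑ i ∈ S, p.2 i) < ∑ i ∈ S, p.1 i := by
    intro p hp
    have h1 : (∑ i ∈ S, (p.2 (σ i) : ℤ)) = ∑ j ∈ S, (p.2 j : ℤ) := by
      apply Finset.sum_bij (fun a _ => σ a)
      · intro a ha; exact hσ.mapsTo ha
      · intro a ha b hb h; exact hσ.injOn ha hb h
      · intro b hb
        obtain ⟨a, ha, rfl⟩ := hσ.surjOn hb
        exact ⟨a, ha, rfl⟩
      · intro a _; rfl
    have h2 : (∑ i ∈ S, (p.2 (σ i) : ℤ)) ≤ ∑ i ∈ S, ((p.1 i : ℤ) + δ i) :=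
      Finset.sum_le_sum (hQ p hp)
    rw [Finset.sum_add_distrib] at h2
    have h3 : (∑ j ∈ S, (p.2 j : ℤ)) < ∑ i ∈ S, (p.1 i : ℤ) := by omega
    push_cast at h3
    exact_mod_cast h3
  refine ⟨key, ?_⟩
  rintro ⟨f, hf⟩
  have hstep : ∀ k, (∑ i ∈ S, f (k+1) i) < ∑ i ∈ S, f k i := fun k => key _ (hf k)
  have hb : ∀ k, (∑ i ∈ S, f k i) + k ≤ ∑ i ∈ S, f 0 i := by
    intro k
    induction k with
    | zero => simp
    | succ m ih => have := hstep m; omega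
  have := hb ((∑ i ∈ S, f 0 i) + 1)
  omega
end

section
/- (An LLRF yields an LRF-based disjunctive transition invariant) Suppose T ⊆ ℚⁿ × ℚⁿ admits an LLRF ⟨ρ₁, …, ρ_d⟩: for every (x, x') ∈ T there exists i with ρⱼ(x) − ρⱼ(x') ≥ 0 for j < i, ρᵢ(x) − ρᵢ(x') ≥ 1, and ρᵢ(x) ≥ 0. Then T⁺ ⊆ T_{ρ₁} ∪ ⋯ ∪ T_{ρ_d}, where T_{ρ} = { (x, x') : ρ(x) ≥ 0 and ρ(x) − ρ(x') ≥ 1 }. -/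
/-!
A chain of ranked steps is again ranked, by the least ranking index `m` along the chain: every
component before `m` is non-increasing on every step, hence on the whole chain; `ρ m` is
non-increasing on every step, drops by at least 1 on a step it ranks, and is non-negative where
that step starts, hence at the start of the chain. So the lexicographic ranking relation is
transitive and contains the transitive closure of the transition relation.
-/

namespace LexRanking

variable {ι α β : Type*} [LinearOrder ι] [Ring β] [PartialOrder β] [IsOrderedRing β]

def RankedBy (ρ : ι → α → β) (i : ι) (a b : α) : Prop :=
  (∀ j < i, 0 ≤ ρ j a - ρ j b) ∧ 1 ≤ ρ i a - ρ i b ∧ 0 ≤ ρ i a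

def Ranked (ρ : ι → α → β) (a b : α) : Prop :=
  ∃ i, RankedBy ρ i a b

variable {ρ : ι → α → β} {i k : ι} {a b c : α}

theorem RankedBy.sub_nonneg_of_le (hab : RankedBy ρ i a b) {j : ι} (hj : j ≤ i) :
    0 ≤ ρ j a - ρ j b := by
  rcases hj.lt_or_eq with hj | rfl
  · exact hab.1 j hj
  · exact zero_le_one.trans hab.2.1

theorem RankedBy.trans_of_le (hab : RankedBy ρ i a b) (hbc : RankedBy ρ k b c) (hik : i ≤ k) :
    RankedBy ρ i a c := by
  refine ⟨fun j hj => ?_, ?_, hab.2.2⟩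
  · rw [← sub_add_sub_cancel]
    exact add_nonneg (hab.1 j hj) (hbc.1 j (hj.trans_le hik))
  · rw [← sub_add_sub_cancel, ← add_zero 1]
    exact add_le_add hab.2.1 (hbc.sub_nonneg_of_le hik)

theorem RankedBy.trans_of_lt (hab : RankedBy ρ i a b) (hbc : RankedBy ρ k b c) (hki : k < i) :
    RankedBy ρ k a c := by
  have hk : 0 ≤ ρ k a - ρ k b := hab.1 k hki
  refine ⟨fun j hj => ?_, ?_, ?_⟩
  · rw [← sub_add_sub_cancel]
    exact add_nonneg (hab.1 j (hj.trans hki)) (hbc.1 j hj)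
  · rw [← sub_add_sub_cancel, ← zero_add 1]
    exact add_le_add hk hbc.2.1
  · exact hbc.2.2.trans (sub_nonneg.mp hk)

instance : IsTrans α (Ranked ρ) where
  trans _ _ _ := fun ⟨i, hab⟩ ⟨k, hbc⟩ =>
    if hik : i ≤ k then ⟨i, hab.trans_of_le hbc hik⟩
    else ⟨k, hab.trans_of_lt hbc (not_le.mp hik)⟩

end LexRanking

open LexRanking in
theorem stmt_19_general (n d : ℕ)
    (T : Set ((Fin n → ℚ) × (Fin n → ℚ)))
    (ρ : Fin d → (Fin n → ℚ) → ℚ)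
    (h : ∀ p ∈ T, ∃ i : Fin d,
      (∀ j < i, 0 ≤ ρ j p.1 - ρ j p.2) ∧ 1 ≤ ρ i p.1 - ρ i p.2 ∧ 0 ≤ ρ i p.1) :
    ∀ x x', Relation.TransGen (fun a b => (a, b) ∈ T) x x' →
      ∃ i : Fin d, 0 ≤ ρ i x ∧ 1 ≤ ρ i x - ρ i x' := by
  intro x x' hxx'
  obtain ⟨i, -, hdrop, hnonneg⟩ :=
    Relation.transGen_minimal (r' := Ranked ρ) (fun a b => h (a, b)) x x' hxx'
  exact ⟨i, hnonneg, hdrop⟩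

theorem stmt_19 (n d : ℕ)
    (T : Set ((Fin n → ℚ) × (Fin n → ℚ)))
    (L : Fin d → Fin n → ℚ) (c : Fin d → ℚ)
    (ρ : Fin d → (Fin n → ℚ) → ℚ)
    (hρ : ∀ i x, ρ i x = (∑ j, L i j * x j) + c i)
    (h : ∀ p ∈ T, ∃ i : Fin d,
      (∀ j < i, 0 ≤ ρ j p.1 - ρ j p.2) ∧ 1 ≤ ρ i p.1 - ρ i p.2 ∧ 0 ≤ ρ i p.1) :
    ∀ x x', Relation.TransGen (fun a b => (a, b) ∈ T) x x' →
      ∃ i : Fin d, 0 ≤ ρ i x ∧ 1 ≤ ρ i x - ρ i x' :=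
  stmt_19_general n d T ρ h
end
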